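/- Let ℓ₁ < 0 < ℓ₂ and δ > 0. There exist C > 0 and N ∈ ℕ such that for every integer n ≥ N and every p ∈ ℂ with ℓ₁ + δ < Re p < ℓ₂ − δ and Im p < 0: | ∫_{ℓ₁}^{ℓ₂} e^{−nt²}/(t−p) dt + πi·e^{−np²}·erfc(i√n·p) | ≤ C·(e^{−nℓ₁²} + e^{−nℓ₂²})/n, where the integral is over the real segment [ℓ₁, ℓ₂] (since Im p < 0, the pole p lies strictly below, i.e. to the right of, this path). -/

import Mathlib

open scoped BigOperators Real
open ComplexConjugate

noncomputable def cerfc (w : ℂ) : ℂ :=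
  1 - (2 / Real.sqrt Real.pi) * ∫ t in (0:ℝ)..(1:ℝ), w * Complex.exp (-((t : ℂ) * w) ^ 2)

/-
Since `Im p < 0`, `1 / (t - p) = -i ∫₀^∞ e^{i(t - p)ξ} dξ`; Fubini and the Fourier transform of
the Gaussian then turn the integral over the whole line into
`∫_ℝ e^{-at²} / (t - p) dt = -πi e^{-ap²} erfc(i√a p)`, after completing the square and using
`∫₀^∞ e^{-(u + w)²} du = (√π / 2) erfc w`. The latter holds because
`s ↦ ∫₀^∞ e^{-(u + sw)²} du + ∫₀^s w e^{-(vw)²} dv` has derivative zero. So the quantity to be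
bounded is minus the sum of the two tails of the integral beyond `l₁` and `l₂`; there
`|t - p| ≥ δ`, and each Gaussian tail is at most `e^{-al²} / (2a|l|)`.
-/

open MeasureTheory Set Filter Topology Complex

lemma norm_cexp_neg_sq_add_le (u : ℝ) (z : ℂ) :
    ‖cexp (-((u : ℂ) + z) ^ 2)‖ ≤ rexp (‖z‖ ^ 2 - u ^ 2 / 2) := by
  rw [Complex.norm_exp, Real.exp_le_exp, Complex.sq_norm, Complex.normSq_apply]
  simp only [neg_re, sq, mul_re, add_re, add_im, ofReal_re, ofReal_im]
  nlinarith [sq_nonneg (u + 2 * z.re)]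

lemma tendsto_cexp_neg_sq_add (z : ℂ) :
    Tendsto (fun u : ℝ => cexp (-((u : ℂ) + z) ^ 2)) atTop (𝓝 0) := by
  refine squeeze_zero_norm (fun u => norm_cexp_neg_sq_add_le u z) ?_
  refine Real.tendsto_exp_atBot.comp (tendsto_atBot_add_const_left _ (‖z‖ ^ 2) ?_)
  exact tendsto_neg_atTop_atBot.comp ((tendsto_pow_atTop two_ne_zero).atTop_div_const two_pos)

lemma norm_add_mul_cexp_neg_sq_add_le (u : ℝ) {z : ℂ} {c : ℝ} (hz : ‖z‖ ≤ c) :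
    ‖((u : ℂ) + z) * cexp (-((u : ℂ) + z) ^ 2)‖ ≤ (|u| + c) * rexp (c ^ 2 - u ^ 2 / 2) := by
  have hc : 0 ≤ c := (norm_nonneg z).trans hz
  rw [norm_mul]
  refine mul_le_mul ?_ ((norm_cexp_neg_sq_add_le u z).trans ?_) (norm_nonneg _) (by positivity)
  · refine (norm_add_le _ _).trans ?_
    rw [Complex.norm_real, Real.norm_eq_abs]
    linarith
  · gcongr

lemma integrable_abs_add_mul_exp (c : ℝ) :
    Integrable fun u : ℝ => (|u| + c) * rexp (c ^ 2 - u ^ 2 / 2) := by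
  have h := ((integrable_mul_exp_neg_mul_sq (b := 1 / 2) one_half_pos).norm.add
    ((integrable_exp_neg_mul_sq (b := 1 / 2) one_half_pos).const_mul c)).const_mul (rexp (c ^ 2))
  refine h.congr (Eventually.of_forall fun u => ?_)
  simp only [Pi.add_apply, norm_mul, Real.norm_eq_abs, Real.abs_exp]
  rw [show c ^ 2 - u ^ 2 / 2 = c ^ 2 + -(1 / 2) * u ^ 2 by ring, Real.exp_add]
  ring

lemma integrable_cexp_neg_sq_add (z : ℂ) :
    Integrable fun u : ℝ => cexp (-((u : ℂ) + z) ^ 2) := by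
  refine (integrable_cexp_quadratic (b := 1) (by simp) (-2 * z) (-z ^ 2)).congr
    (Eventually.of_forall fun u => ?_)
  simp only
  ring_nf

lemma integral_Ioi_add_mul_cexp_neg_sq_add (z : ℂ) :
    ∫ u in Ioi (0 : ℝ), -2 * (((u : ℂ) + z) * cexp (-((u : ℂ) + z) ^ 2)) = -cexp (-z ^ 2) := by
  have hderiv (u : ℝ) : HasDerivAt (fun u : ℝ => cexp (-((u : ℂ) + z) ^ 2))
      (-2 * (((u : ℂ) + z) * cexp (-((u : ℂ) + z) ^ 2))) u := by
    have h : HasDerivAt (fun x : ℂ => -(x + z) ^ 2) (-(2 * ((u : ℂ) + z))) u := by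
      simpa using (((hasDerivAt_id (u : ℂ)).add_const z).fun_pow 2).fun_neg
    convert h.cexp.comp_ofReal using 1
    ring
  have hint : IntegrableOn (fun u : ℝ => -2 * (((u : ℂ) + z) * cexp (-((u : ℂ) + z) ^ 2)))
      (Ioi 0) :=
    (((integrable_abs_add_mul_exp ‖z‖).const_mul 2).mono'
      (by fun_prop) (Eventually.of_forall fun u => by
        rw [norm_mul, norm_neg, RCLike.norm_ofNat]
        gcongr
        exact norm_add_mul_cexp_neg_sq_add_le u le_rfl)).integrableOn
  rw [integral_Ioi_of_hasDerivAt_of_tendsto' (fun u _ => hderiv u) hint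
    (tendsto_cexp_neg_sq_add z)]
  simp

lemma hasDerivAt_integral_Ioi_cexp_neg_sq_add_mul (w : ℂ) (s₀ : ℝ) :
    HasDerivAt (fun s : ℝ => ∫ u in Ioi (0 : ℝ), cexp (-((u : ℂ) + s * w) ^ 2))
      (-(w * cexp (-((s₀ : ℂ) * w) ^ 2))) s₀ := by
  set c := (|s₀| + 1) * ‖w‖
  have hderiv (s u : ℝ) : HasDerivAt (fun s : ℝ => cexp (-((u : ℂ) + s * w) ^ 2))
      (-2 * (((u : ℂ) + s * w) * cexp (-((u : ℂ) + s * w) ^ 2)) * w) s := by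
    have h : HasDerivAt (fun x : ℂ => -((u : ℂ) + x * w) ^ 2) (-(2 * ((u : ℂ) + s * w) * w)) s := by
      simpa using ((((hasDerivAt_id (s : ℂ)).mul_const w).const_add (u : ℂ)).fun_pow 2).fun_neg
    convert h.cexp.comp_ofReal using 1
    ring
  have hbound : ∀ u : ℝ, ∀ s ∈ Metric.ball s₀ 1,
      ‖-2 * (((u : ℂ) + s * w) * cexp (-((u : ℂ) + s * w) ^ 2)) * w‖
        ≤ 2 * ((|u| + c) * rexp (c ^ 2 - u ^ 2 / 2)) * ‖w‖ := by
    intro u s hs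
    have hsw : ‖(s : ℂ) * w‖ ≤ c := by
      rw [norm_mul, Complex.norm_real, Real.norm_eq_abs]
      refine mul_le_mul_of_nonneg_right ?_ (norm_nonneg w)
      have := Real.dist_eq s s₀ ▸ Metric.mem_ball.mp hs
      linarith [abs_sub_abs_le_abs_sub s s₀]
    rw [norm_mul, norm_mul, norm_neg, RCLike.norm_ofNat]
    gcongr
    exact norm_add_mul_cexp_neg_sq_add_le u hsw
  obtain ⟨-, h⟩ := hasDerivAt_integral_of_dominated_loc_of_deriv_le
    (μ := volume.restrict (Ioi 0)) (F := fun (s u : ℝ) => cexp (-((u : ℂ) + s * w) ^ 2))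
    (Metric.ball_mem_nhds s₀ one_pos)
    (Eventually.of_forall fun s => (integrable_cexp_neg_sq_add _).integrableOn.aestronglyMeasurable)
    (integrable_cexp_neg_sq_add _).integrableOn (by fun_prop)
    (Eventually.of_forall fun u => hbound u)
    (((integrable_abs_add_mul_exp c).const_mul 2).mul_const ‖w‖).integrableOn
    (Eventually.of_forall fun u s _ => hderiv s u)
  rwa [integral_mul_const, integral_Ioi_add_mul_cexp_neg_sq_add, neg_mul, mul_comm] at h

theorem integral_Ioi_cexp_neg_sq_add (w : ℂ) :
    ∫ u in Ioi (0 : ℝ), cexp (-((u : ℂ) + w) ^ 2) = (√π / 2 : ℝ) * cerfc w := by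
  set G : ℝ → ℂ := fun s => (∫ u in Ioi (0 : ℝ), cexp (-((u : ℂ) + s * w) ^ 2)) +
    ∫ v in (0 : ℝ)..s, w * cexp (-((v : ℂ) * w) ^ 2)
  have hG (s : ℝ) : HasDerivAt G 0 s := by
    have hcont : Continuous fun v : ℝ => w * cexp (-((v : ℂ) * w) ^ 2) := by fun_prop
    have h := (hasDerivAt_integral_Ioi_cexp_neg_sq_add_mul w s).add
      (hcont.integral_hasStrictDerivAt 0 s).hasDerivAt
    rwa [neg_add_cancel] at h
  have hG_const : G 1 = G 0 := is_const_of_deriv_eq_zero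
    (fun s => (hG s).differentiableAt) (fun s => (hG s).deriv) 1 0
  have hG0 : G 0 = (√π / 2 : ℝ) := by
    have h := integral_gaussian_Ioi 1
    simp only [neg_one_mul, div_one] at h
    rw [← h, ← integral_complex_ofReal]
    simp [G, Complex.ofReal_exp]
  have hsqrtπ : (√π : ℂ) ≠ 0 := by exact_mod_cast (Real.sqrt_pos.mpr Real.pi_pos).ne'
  have hG1 : (∫ u in Ioi (0 : ℝ), cexp (-((u : ℂ) + w) ^ 2)) +
      ∫ v in (0 : ℝ)..1, w * cexp (-((v : ℂ) * w) ^ 2) = (√π / 2 : ℝ) := by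
    simpa [G] using hG_const.trans hG0
  rw [cerfc, eq_sub_of_add_eq hG1]
  push_cast
  field_simp

lemma integral_Ioi_cexp_I_mul {z : ℂ} (hz : 0 < z.im) :
    ∫ ξ in Ioi (0 : ℝ), cexp (I * z * ξ) = I / z := by
  have hz0 : z ≠ 0 := by rintro rfl; simp at hz
  rw [integral_exp_mul_complex_Ioi (by simpa using hz) 0]
  field_simp
  simp [I_sq]

lemma integral_Ioi_cexp_neg_I_mul_mul_gaussian {a : ℝ} (ha : 0 < a) (p : ℂ) :
    ∫ ξ in Ioi (0 : ℝ), cexp (-I * p * ξ) * cexp (-(ξ : ℂ) ^ 2 / (4 * a)) =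
      √(π * a) * cexp (-a * p ^ 2) * cerfc (I * √a * p) := by
  set w := I * √a * p
  have hsa : (√a : ℂ) ≠ 0 := by exact_mod_cast (Real.sqrt_pos.mpr ha).ne'
  have hsa2 : (√a : ℂ) ^ 2 = a := by exact_mod_cast Real.sq_sqrt ha.le
  have hb : 0 < (2 * √a)⁻¹ := by positivity
  have hsquare (ξ : ℝ) : cexp (-I * p * ξ) * cexp (-(ξ : ℂ) ^ 2 / (4 * a)) =
      cexp (-a * p ^ 2) * cexp (-(((2 * √a)⁻¹ * ξ : ℝ) + w) ^ 2) := by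
    rw [← Complex.exp_add, ← Complex.exp_add, ← hsa2]
    congr 1
    push_cast
    field_simp
    linear_combination (16 * (√a : ℂ) ^ 4 * p ^ 2) * I_sq
  have hscale := integral_comp_mul_left_Ioi (fun u : ℝ => cexp (-((u : ℂ) + w) ^ 2)) 0 hb
  rw [mul_zero, inv_inv, integral_Ioi_cexp_neg_sq_add, Complex.real_smul] at hscale
  simp_rw [hsquare]
  rw [integral_const_mul, hscale, Real.sqrt_mul Real.pi_pos.le]
  push_cast
  field_simp

lemma ofReal_cpow_one_half_eq_sqrt {x : ℝ} (hx : 0 ≤ x) : (x : ℂ) ^ (1 / 2 : ℂ) = (√x : ℝ) := by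
  rw [Real.sqrt_eq_rpow, Complex.ofReal_cpow hx]
  norm_num

theorem integral_cexp_neg_mul_sq_div_sub {a : ℝ} (ha : 0 < a) {p : ℂ} (hp : p.im < 0) :
    ∫ t : ℝ, cexp (-a * t ^ 2) / (t - p) =
      -(π * I * cexp (-a * p ^ 2) * cerfc (I * √a * p)) := by
  set f : ℝ → ℝ → ℂ := fun t ξ => cexp (-a * t ^ 2) * cexp (I * (t - p) * ξ)
  -- `1 / (t - p)` is a Laplace integral because `p` lies below the real axis
  have hinv (t : ℝ) : cexp (-a * t ^ 2) / (t - p) = -I * ∫ ξ in Ioi (0 : ℝ), f t ξ := by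
    have hz : 0 < ((t : ℂ) - p).im := by simpa using hp
    have hz0 : (t : ℂ) - p ≠ 0 := by rintro h; simp [h] at hz
    rw [integral_const_mul, integral_Ioi_cexp_I_mul hz]
    field_simp
    simp [I_sq]
  have hint : Integrable (Function.uncurry f) (volume.prod (volume.restrict (Ioi 0))) := by
    have hdom := (integrable_exp_neg_mul_sq ha).mul_prod
      (exp_neg_integrableOn_Ioi 0 (neg_pos.mpr hp))
    refine hdom.mono' (by fun_prop) (Eventually.of_forall fun x => le_of_eq ?_)
    simp only [Function.uncurry, f, norm_mul, Complex.norm_exp]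
    simp [Complex.mul_re, Complex.mul_im, ← Complex.ofReal_pow]
  have hfourier (ξ : ℝ) : ∫ t : ℝ, f t ξ =
      √(π / a) * (cexp (-I * p * ξ) * cexp (-(ξ : ℂ) ^ 2 / (4 * a))) := by
    have h := fourierIntegral_gaussian (b := a) (by simpa using ha) ξ
    rw [← Complex.ofReal_div, ofReal_cpow_one_half_eq_sqrt (by positivity)] at h
    calc ∫ t : ℝ, f t ξ
        = ∫ t : ℝ, cexp (-I * p * ξ) * (cexp (I * ξ * t) * cexp (-a * t ^ 2)) := by
          congr 1 with t
          simp only [f, ← Complex.exp_add]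
          ring_nf
      _ = _ := by rw [integral_const_mul, h]; ring
  have hπ : (√(π / a) * √(π * a) : ℝ) = π := by
    rw [← Real.sqrt_mul (by positivity)]
    field_simp
    exact Real.sqrt_sq Real.pi_pos.le
  calc ∫ t : ℝ, cexp (-a * t ^ 2) / (t - p)
      = -I * ∫ t : ℝ, ∫ ξ in Ioi (0 : ℝ), f t ξ := by simp_rw [hinv, integral_const_mul]
    _ = -I * ∫ ξ in Ioi (0 : ℝ), ∫ t : ℝ, f t ξ := by rw [integral_integral_swap hint]
    _ = -I * (√(π / a) * (√(π * a) * cexp (-a * p ^ 2) * cerfc (I * √a * p))) := by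
        simp_rw [hfourier, integral_const_mul, integral_Ioi_cexp_neg_I_mul_mul_gaussian ha]
    _ = _ := by
        rw [← mul_assoc (√(π / a) : ℂ), ← mul_assoc (√(π / a) : ℂ), ← Complex.ofReal_mul, hπ]
        ring

lemma integral_Ioi_exp_neg_mul_sq_le {a l : ℝ} (ha : 0 < a) (hl : 0 < l) :
    ∫ t in Ioi l, rexp (-a * t ^ 2) ≤ rexp (-a * l ^ 2) / (2 * a * l) := by
  have hal : 0 < 2 * a * l := by positivity
  -- `-a t²` is concave, so it lies below its tangent line at `l`
  calc ∫ t in Ioi l, rexp (-a * t ^ 2)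
      ≤ ∫ t in Ioi l, rexp (a * l ^ 2) * rexp (-(2 * a * l) * t) := by
        refine setIntegral_mono_on (integrable_exp_neg_mul_sq ha).integrableOn
          ((exp_neg_integrableOn_Ioi l hal).const_mul _) measurableSet_Ioi fun t _ => ?_
        rw [← Real.exp_add]
        gcongr
        nlinarith [mul_nonneg ha.le (sq_nonneg (t - l))]
    _ = rexp (-a * l ^ 2) / (2 * a * l) := by
        rw [integral_const_mul, integral_exp_mul_Ioi (by linarith) l, neg_div_neg_eq,
          ← mul_div_assoc, ← Real.exp_add]
        ring_nf

lemma integral_Iic_exp_neg_mul_sq_le {a l : ℝ} (ha : 0 < a) (hl : l < 0) :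
    ∫ t in Iic l, rexp (-a * t ^ 2) ≤ rexp (-a * l ^ 2) / (2 * a * -l) := by
  have h := integral_comp_neg_Ioi (-l) fun t : ℝ => rexp (-a * t ^ 2)
  simp only [neg_neg, even_two, Even.neg_pow] at h
  rw [← h]
  simpa using integral_Ioi_exp_neg_mul_sq_le ha (neg_pos.mpr hl)

lemma integrable_cexp_neg_mul_sq_div_sub {a : ℝ} (ha : 0 < a) {p : ℂ} (hp : p.im ≠ 0) :
    Integrable fun t : ℝ => cexp (-a * t ^ 2) / (t - p) := by
  have hne (t : ℝ) : (t : ℂ) - p ≠ 0 := fun h => hp (by simpa using congrArg Complex.im h)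
  refine ((integrable_exp_neg_mul_sq ha).div_const |p.im|).mono'
    (Continuous.div (by fun_prop) (by fun_prop) hne).aestronglyMeasurable
    (Eventually.of_forall fun t => ?_)
  have him : |p.im| ≤ ‖(t : ℂ) - p‖ := by simpa using Complex.abs_im_le_norm ((t : ℂ) - p)
  rw [norm_div, norm_cexp_neg_mul_sq, ofReal_re]
  gcongr

lemma norm_setIntegral_cexp_neg_mul_sq_div_sub_le {a δ : ℝ} (ha : 0 < a) (hδ : 0 < δ) {p : ℂ}
    {s : Set ℝ} (hs : MeasurableSet s) (hsp : ∀ t ∈ s, δ ≤ |t - p.re|) :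
    ‖∫ t in s, cexp (-a * t ^ 2) / (t - p)‖ ≤ (∫ t in s, rexp (-a * t ^ 2)) / δ := by
  rw [← integral_div]
  refine norm_integral_le_of_norm_le ((integrable_exp_neg_mul_sq ha).div_const δ).integrableOn ?_
  filter_upwards [ae_restrict_mem hs] with t ht
  have hre : δ ≤ ‖(t : ℂ) - p‖ := by
    simpa using (hsp t ht).trans (Complex.abs_re_le_norm ((t : ℂ) - p))
  rw [norm_div, norm_cexp_neg_mul_sq, ofReal_re]
  gcongr

lemma norm_integral_Ioi_cexp_neg_mul_sq_div_sub_le {a δ l : ℝ} (ha : 0 < a) (hδ : 0 < δ)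
    (hl : 0 < l) {p : ℂ} (hp : p.re < l - δ) :
    ‖∫ t in Ioi l, cexp (-a * t ^ 2) / (t - p)‖ ≤ (2 * l * δ)⁻¹ * (rexp (-a * l ^ 2) / a) := by
  refine (norm_setIntegral_cexp_neg_mul_sq_div_sub_le ha hδ measurableSet_Ioi
    fun t ht => le_abs.mpr (Or.inl (by linarith [mem_Ioi.mp ht]))).trans ?_
  calc (∫ t in Ioi l, rexp (-a * t ^ 2)) / δ ≤ rexp (-a * l ^ 2) / (2 * a * l) / δ := by
        gcongr
        exact integral_Ioi_exp_neg_mul_sq_le ha hl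
    _ = _ := by field_simp

lemma norm_integral_Iic_cexp_neg_mul_sq_div_sub_le {a δ l : ℝ} (ha : 0 < a) (hδ : 0 < δ)
    (hl : l < 0) {p : ℂ} (hp : l + δ < p.re) :
    ‖∫ t in Iic l, cexp (-a * t ^ 2) / (t - p)‖ ≤ (2 * -l * δ)⁻¹ * (rexp (-a * l ^ 2) / a) := by
  refine (norm_setIntegral_cexp_neg_mul_sq_div_sub_le ha hδ measurableSet_Iic
    fun t ht => le_abs.mpr (Or.inr (by linarith [mem_Iic.mp ht]))).trans ?_
  have hl' : 0 < -l := neg_pos.mpr hl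
  calc (∫ t in Iic l, rexp (-a * t ^ 2)) / δ ≤ rexp (-a * l ^ 2) / (2 * a * -l) / δ := by
        gcongr
        exact integral_Iic_exp_neg_mul_sq_le ha hl
    _ = _ := by field_simp

lemma intervalIntegral_eq_integral_sub_Iic_sub_Ioi {E : Type*} [NormedAddCommGroup E]
    [NormedSpace ℝ E] {f : ℝ → E} (hf : Integrable f) (a b : ℝ) :
    ∫ t in a..b, f t = (∫ t, f t) - (∫ t in Iic a, f t) - ∫ t in Ioi b, f t := by
  rw [← intervalIntegral.integral_Iic_sub_Iic hf.integrableOn hf.integrableOn,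
    ← intervalIntegral.integral_Iic_add_Ioi hf.integrableOn hf.integrableOn]
  abel

/-- Steepest descent for a Gaussian with a pole coalescing with the saddle point:
the complementary error function emerges. -/
theorem stmt_10 (l₁ l₂ δ : ℝ) (hl₁ : l₁ < 0) (hl₂ : 0 < l₂) (hδ : 0 < δ) :
    ∃ (C : ℝ) (N : ℕ), 0 < C ∧
      ∀ n : ℕ, N ≤ n → ∀ p : ℂ, l₁ + δ < p.re → p.re < l₂ - δ → p.im < 0 →
        ‖(∫ t in l₁..l₂, Complex.exp (-(n : ℂ) * (t : ℂ) ^ 2) / ((t : ℂ) - p)) +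
            Real.pi * Complex.I * Complex.exp (-(n : ℂ) * p ^ 2) *
              cerfc (Complex.I * (Real.sqrt n : ℂ) * p)‖ ≤
          C * (Real.exp (-(n : ℝ) * l₁ ^ 2) + Real.exp (-(n : ℝ) * l₂ ^ 2)) / n := by
  have hl₁' : 0 < -l₁ := neg_pos.mpr hl₁
  set K₁ := (2 * -l₁ * δ)⁻¹
  set K₂ := (2 * l₂ * δ)⁻¹
  refine ⟨K₁ + K₂, 1, by positivity, fun n hn p hp₁ hp₂ hp => ?_⟩
  have ha : (0 : ℝ) < n := by exact_mod_cast hn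
  have hsplit := intervalIntegral_eq_integral_sub_Iic_sub_Ioi
    (integrable_cexp_neg_mul_sq_div_sub ha hp.ne) l₁ l₂
  rw [integral_cexp_neg_mul_sq_div_sub ha hp] at hsplit
  have h₁ := norm_integral_Iic_cexp_neg_mul_sq_div_sub_le ha hδ hl₁ hp₁
  have h₂ := norm_integral_Ioi_cexp_neg_mul_sq_div_sub_le ha hδ hl₂ hp₂
  push_cast at hsplit h₁ h₂
  set T₁ := ∫ t in Iic l₁, cexp (-n * t ^ 2) / (t - p)
  set T₂ := ∫ t in Ioi l₂, cexp (-n * t ^ 2) / (t - p)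
  set E₁ := rexp (-n * l₁ ^ 2)
  set E₂ := rexp (-n * l₂ ^ 2)
  have hcross : 0 ≤ K₁ * (E₂ / n) + K₂ * (E₁ / n) := by positivity
  calc _ = ‖-(T₁ + T₂)‖ := by rw [hsplit]; congr 1; ring
    _ ≤ ‖T₁‖ + ‖T₂‖ := by rw [norm_neg]; exact norm_add_le _ _
    _ ≤ K₁ * (E₁ / n) + K₂ * (E₂ / n) := add_le_add h₁ h₂
    _ ≤ (K₁ + K₂) * (E₁ + E₂) / n := by
        rw [show (K₁ + K₂) * (E₁ + E₂) / n =
          K₁ * (E₁ / n) + K₂ * (E₂ / n) + (K₁ * (E₂ / n) + K₂ * (E₁ / n)) by ring]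
        linarith
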